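/- Let n be a nonnegative integer and define T̃_n(a,c) = (1+a−c)_n (c)_n · _3F_2(−n, a/2, (a+1)/2 ; 1+a−c, c ; 4), and Ũ_n(x,y,z) = T̃_n( (1+2x−y−z−2n)/3, (2+x+y−2z−n)/3 ). Let x, y, z ∈ ℂ and assume that for every permutation (x',y',z') of (x,y,z), setting a' = (1+2x'−y'−z'−2n)/3 and c' = (2+x'+y'−2z'−n)/3, the rising factorials (1+a'−c')_n and (c')_n are nonzero. Then Ũ_n(x,y,z) is invariant under all six permutations of (x,y,z). -/

import Mathlib

open Finset

/-!
Since `(1+a-c)_n / (1+a-c)_k = (1+a-c+k)_{n-k}` and `(a/2)_k ((a+1)/2)_k 4^k = (a)_{2k}`, clearing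
the denominators turns `T̃_n(a, c)` into a polynomial `Tpoly n b c` in `b = 1+a-c` and `c`, visibly
symmetric in `b` and `c`. A telescoping (Zeilberger) certificate gives a three-term recurrence in
`n` for it, and induction on that shows `Tpoly n b c = Tpoly n (2-n-b-c) c`. Hence, when
`u + v + w = 2 - n`, the value `Tpoly n v w` is unchanged by every permutation of `(u, v, w)`.
For `Ũ_n(x, y, z)` one has `b = m - y`, `c = m - z` with `m = (2-n+x+y+z)/3`, so
`(m-x) + (m-y) + (m-z) = 2 - n`, and permuting `x, y, z` permutes `m-x, m-y, m-z`.
-/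

/-- The rising factorial (Pochhammer symbol) `(a)_k = a(a+1)⋯(a+k-1)`. -/
noncomputable def poch (a : ℂ) (k : ℕ) : ℂ := ∏ i ∈ Finset.range k, (a + i)

/-- `Tt n a c = (1+a-c)_n (c)_n · ₃F₂(-n, a/2, (a+1)/2 ; 1+a-c, c ; 4)`. -/
noncomputable def Tt (n : ℕ) (a c : ℂ) : ℂ :=
  poch (1 + a - c) n * poch c n *
    ∑ k ∈ Finset.range (n + 1),
      (poch (-(n : ℂ)) k * poch (a / 2) k * poch ((a + 1) / 2) k) /
        ((Nat.factorial k : ℂ) * poch (1 + a - c) k * poch c k) * (4 : ℂ) ^ k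

/-- `Ut n x y z = Tt n ((1+2x-y-z-2n)/3) ((2+x+y-2z-n)/3)`. -/
noncomputable def Ut (n : ℕ) (x y z : ℂ) : ℂ :=
  Tt n ((1 + 2 * x - y - z - 2 * (n : ℂ)) / 3) ((2 + x + y - 2 * z - (n : ℂ)) / 3)

lemma poch_succ (a : ℂ) (k : ℕ) : poch a (k + 1) = poch a k * (a + k) :=
  prod_range_succ _ _

lemma poch_succ' (a : ℂ) (k : ℕ) : poch a (k + 1) = a * poch (a + 1) k := by
  rw [poch, prod_range_succ', mul_comm]
  congr 1
  · push_cast; ring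
  · exact prod_congr rfl fun i _ => by push_cast; ring

lemma poch_mul_add_eq_mul_poch_add_one (a : ℂ) (k : ℕ) :
    poch a k * (a + k) = a * poch (a + 1) k := by
  rw [← poch_succ, poch_succ']

lemma poch_add (a : ℂ) (m k : ℕ) : poch a (m + k) = poch a m * poch (a + m) k := by
  rw [poch, poch, poch, prod_range_add]
  congr 1
  exact prod_congr rfl fun i _ => by push_cast; ring

lemma poch_ne_zero_of_le {a : ℂ} {n k : ℕ} (h : poch a n ≠ 0) (hk : k ≤ n) :
    poch a k ≠ 0 := by
  obtain ⟨m, rfl⟩ := Nat.exists_eq_add_of_le hk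
  rw [poch_add] at h
  exact left_ne_zero_of_mul h

lemma poch_two_mul (a : ℂ) (k : ℕ) :
    poch a (2 * k) = poch (a / 2) k * poch ((a + 1) / 2) k * 4 ^ k := by
  induction k with
  | zero => simp [poch]
  | succ k ih =>
    rw [show 2 * (k + 1) = 2 * k + 1 + 1 from rfl, poch_succ, poch_succ, poch_succ, poch_succ,
      pow_succ]
    push_cast
    linear_combination (4 * (a / 2 + k) * ((a + 1) / 2 + k)) * ih

/-- The `k`-th summand of `T̃_n(b+c-1, c)` after clearing denominators. -/
noncomputable def Tterm (n k : ℕ) (b c : ℂ) : ℂ :=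
  poch (-(n : ℂ)) k / (k.factorial : ℂ) * poch (b + c - 1) (2 * k) *
    poch (b + k) (n - k) * poch (c + k) (n - k)

noncomputable def Tpoly (n : ℕ) (b c : ℂ) : ℂ := ∑ k ∈ range (n + 1), Tterm n k b c

lemma Tt_eq_Tpoly (n : ℕ) (a c : ℂ) (hb : poch (1 + a - c) n ≠ 0) (hc : poch c n ≠ 0) :
    Tt n a c = Tpoly n (1 + a - c) c := by
  rw [Tt, Tpoly, mul_sum]
  refine sum_congr rfl fun k hk => ?_
  have hkn : k ≤ n := Nat.lt_succ_iff.mp (mem_range.mp hk)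
  have hbk := poch_ne_zero_of_le hb hkn
  have hck := poch_ne_zero_of_le hc hkn
  have hfk : (k.factorial : ℂ) ≠ 0 := Nat.cast_ne_zero.mpr k.factorial_ne_zero
  obtain ⟨m, rfl⟩ := Nat.exists_eq_add_of_le hkn
  rw [Tterm, Nat.add_sub_cancel_left, show 1 + a - c + c - 1 = a by ring,
    poch_add (1 + a - c) k m, poch_add c k m, poch_two_mul a k]
  field_simp

lemma Tpoly_comm (n : ℕ) (b c : ℂ) : Tpoly n b c = Tpoly n c b := by
  refine sum_congr rfl fun k _ => ?_
  rw [Tterm, Tterm, show c + b - 1 = b + c - 1 by ring]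
  ring

lemma add_one_mul_Tterm_succ_succ (n k : ℕ) (b c : ℂ) :
    ((k : ℂ) + 1) * Tterm (n + 1) (k + 1) b c =
      poch (-((n : ℂ) + 1)) k * (-((n : ℂ) + 1) + k) / (k.factorial : ℂ) *
        poch (b + c - 1) (2 * (k + 1)) * poch (b + ((k : ℂ) + 1)) (n - k) *
        poch (c + ((k : ℂ) + 1)) (n - k) := by
  have hfk : (k.factorial : ℂ) ≠ 0 := Nat.cast_ne_zero.mpr k.factorial_ne_zero
  have hk1 : (k : ℂ) + 1 ≠ 0 := Nat.cast_add_one_ne_zero k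
  rw [Tterm, poch_succ, Nat.factorial_succ, Nat.add_sub_add_right]
  push_cast
  field_simp

/-- The Zeilberger certificate of the recurrence `Tpoly_succ`: its defect in the `k`-th summand is
`G k - G (k + 1)` with `G k = k * Tterm (n + 1) k b c`. -/
lemma Tterm_succ_telescope {n k : ℕ} (hk : k ≤ n) (b c : ℂ) :
    ((n : ℂ) + 1) * Tterm (n + 1) k b c =
      ((n : ℂ) + 1) * ((b + c - 1) * (-n - c) * Tterm n k (b + 1) c
          + (b + c - 1) * (-n - b) * Tterm n k b (c + 1) + (n + b) * (n + c) * Tterm n k b c)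
        + (k * Tterm (n + 1) k b c - ((k : ℂ) + 1) * Tterm (n + 1) (k + 1) b c) := by
  rw [add_one_mul_Tterm_succ_succ]
  simp only [Tterm]
  obtain ⟨m, rfl⟩ := Nat.exists_eq_add_of_le hk
  rw [show k + m + 1 - k = m + 1 by omega, Nat.add_sub_cancel_left, poch_succ (b + k) m,
    poch_succ (c + k) m, show 2 * (k + 1) = 2 * k + 1 + 1 from rfl,
    poch_succ (b + c - 1) (2 * k + 1), poch_succ (b + c - 1) (2 * k)]
  push_cast
  rw [show b + 1 + c - 1 = b + c - 1 + 1 by ring, show b + (c + 1) - 1 = b + c - 1 + 1 by ring,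
    show b + 1 + (k : ℂ) = b + k + 1 by ring, show c + 1 + (k : ℂ) = c + k + 1 by ring,
    show b + ((k : ℂ) + 1) = b + k + 1 by ring, show c + ((k : ℂ) + 1) = c + k + 1 by ring]
  have hb := poch_mul_add_eq_mul_poch_add_one (b + k) m
  have hc := poch_mul_add_eq_mul_poch_add_one (c + k) m
  have hs := poch_mul_add_eq_mul_poch_add_one (b + c - 1) (2 * k)
  have hn := poch_mul_add_eq_mul_poch_add_one (-((k : ℂ) + m + 1)) k
  push_cast at hs
  rw [show -((k : ℂ) + m + 1) + 1 = -((k : ℂ) + m) by ring] at hn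
  linear_combination
    (-((b + c - 1) * (-((k : ℂ) + m) - c) * poch (b + c - 1 + 1) (2 * k) *
          poch (b + k + 1) m * poch (c + k) m
        + (b + c - 1) * (-((k : ℂ) + m) - b) * poch (b + c - 1 + 1) (2 * k) *
          poch (b + k) m * poch (c + k + 1) m
        + ((k : ℂ) + m + b) * ((k : ℂ) + m + c) * poch (b + c - 1) (2 * k) *
          poch (b + k) m * poch (c + k) m) / (k.factorial : ℂ)) * hn
    + (poch (-((k : ℂ) + m + 1)) k * ((m : ℂ) + 1) * (b + c - 1 + 2 * k) *
        poch (b + c - 1) (2 * k) * poch (c + k + 1) m / (k.factorial : ℂ)) * hb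
    + (poch (-((k : ℂ) + m + 1)) k * ((m : ℂ) + 1) * (b + c - 1 + 2 * k) *
        poch (b + c - 1) (2 * k) * poch (b + k + 1) m / (k.factorial : ℂ)) * hc
    - (poch (-((k : ℂ) + m + 1)) k * ((m : ℂ) + 1) *
        (((k : ℂ) + m + c) * poch (b + k + 1) m * poch (c + k) m
          + ((k : ℂ) + m + b) * poch (b + k) m * poch (c + k + 1) m) / (k.factorial : ℂ)) * hs

lemma Tpoly_succ (n : ℕ) (b c : ℂ) :
    Tpoly (n + 1) b c =
      (b + c - 1) * (-n - c) * Tpoly n (b + 1) c + (b + c - 1) * (-n - b) * Tpoly n b (c + 1)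
        + (n + b) * (n + c) * Tpoly n b c := by
  apply mul_left_cancel₀ (Nat.cast_add_one_ne_zero n : (n : ℂ) + 1 ≠ 0)
  set G : ℕ → ℂ := fun k => k * Tterm (n + 1) k b c
  have hsplit : ((n : ℂ) + 1) * Tpoly (n + 1) b c =
      ∑ k ∈ range (n + 1), ((n : ℂ) + 1) * Tterm (n + 1) k b c + G (n + 1) := by
    rw [Tpoly, sum_range_succ, mul_add, mul_sum]
    push_cast [G]
    rfl
  have htele : ∀ k ∈ range (n + 1), ((n : ℂ) + 1) * Tterm (n + 1) k b c =
      ((n : ℂ) + 1) * ((b + c - 1) * (-n - c) * Tterm n k (b + 1) c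
          + (b + c - 1) * (-n - b) * Tterm n k b (c + 1) + (n + b) * (n + c) * Tterm n k b c)
        + (G k - G (k + 1)) := fun k hk => by
    push_cast [G]
    exact Tterm_succ_telescope (Nat.lt_succ_iff.mp (mem_range.mp hk)) b c
  rw [hsplit, sum_congr rfl htele, sum_add_distrib, sum_range_sub', ← mul_sum]
  simp only [Tpoly, mul_sum, ← sum_add_distrib, G, CharP.cast_eq_zero, zero_mul, zero_sub,
    neg_add_cancel_right]

lemma Tpoly_reflect (n : ℕ) (b c : ℂ) : Tpoly n b c = Tpoly n (2 - n - b - c) c := by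
  induction n generalizing b c with
  | zero => simp [Tpoly, Tterm, poch]
  | succ n ih =>
    set b' : ℂ := 2 - ((n + 1 : ℕ) : ℂ) - b - c
    have h₁ : Tpoly n (b + 1) c = Tpoly n b' c := by
      rw [ih]; congr 1; push_cast [b']; ring
    have h₂ : Tpoly n b (c + 1) = Tpoly n b' (c + 1) := by
      rw [ih]; congr 1; push_cast [b']; ring
    have h₃ : Tpoly n b c = Tpoly n (b' + 1) c := by
      rw [ih]; congr 1; push_cast [b']; ring
    rw [Tpoly_succ n b c, Tpoly_succ n b' c, h₁, h₂, h₃]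
    push_cast [b']
    ring

lemma Tpoly_perm {n : ℕ} {u v w : ℂ} (h : u + v + w = 2 - n) :
    Tpoly n v w = Tpoly n w v ∧ Tpoly n v w = Tpoly n u w ∧ Tpoly n v w = Tpoly n w u ∧
      Tpoly n v w = Tpoly n u v ∧ Tpoly n v w = Tpoly n v u := by
  have hvw : Tpoly n v w = Tpoly n u w := by
    rw [Tpoly_reflect]; congr 1; linear_combination -h
  have hwv : Tpoly n w v = Tpoly n u v := by
    rw [Tpoly_reflect]; congr 1; linear_combination -h
  refine ⟨Tpoly_comm n v w, hvw, hvw.trans (Tpoly_comm n u w), ?_, ?_⟩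
  · rw [Tpoly_comm, hwv]
  · rw [Tpoly_comm, hwv, Tpoly_comm]

lemma Ut_eq_Tpoly {n : ℕ} {x y z m : ℂ} (hm : 3 * m = 2 - n + x + y + z)
    (h : poch (1 + (1 + 2 * x - y - z - 2 * (n : ℂ)) / 3 -
          (2 + x + y - 2 * z - (n : ℂ)) / 3) n ≠ 0 ∧
      poch ((2 + x + y - 2 * z - (n : ℂ)) / 3) n ≠ 0) :
    Ut n x y z = Tpoly n (m - y) (m - z) := by
  rw [Ut, Tt_eq_Tpoly n _ _ h.1 h.2]
  congr 1 <;> linear_combination -hm / 3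

theorem stmt_8 (n : ℕ) (x y z : ℂ)
    (h : ∀ p : ℂ × ℂ × ℂ,
      p ∈ ({(x, y, z), (x, z, y), (y, x, z), (y, z, x), (z, x, y), (z, y, x)} :
        Set (ℂ × ℂ × ℂ)) →
      poch (1 + (1 + 2 * p.1 - p.2.1 - p.2.2 - 2 * (n : ℂ)) / 3 -
          (2 + p.1 + p.2.1 - 2 * p.2.2 - (n : ℂ)) / 3) n ≠ 0 ∧
      poch ((2 + p.1 + p.2.1 - 2 * p.2.2 - (n : ℂ)) / 3) n ≠ 0) :
    Ut n x y z = Ut n x z y ∧ Ut n x y z = Ut n y x z ∧ Ut n x y z = Ut n y z x ∧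
      Ut n x y z = Ut n z x y ∧ Ut n x y z = Ut n z y x := by
  set m : ℂ := (2 - n + x + y + z) / 3
  have hm : 3 * m = 2 - n + x + y + z := by ring
  rw [Ut_eq_Tpoly hm (h (x, y, z) (by simp)),
    Ut_eq_Tpoly (by rw [hm]; ring) (h (x, z, y) (by simp)),
    Ut_eq_Tpoly (by rw [hm]; ring) (h (y, x, z) (by simp)),
    Ut_eq_Tpoly (by rw [hm]; ring) (h (y, z, x) (by simp)),
    Ut_eq_Tpoly (by rw [hm]; ring) (h (z, x, y) (by simp)),
    Ut_eq_Tpoly (by rw [hm]; ring) (h (z, y, x) (by simp))]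
  exact Tpoly_perm (by linear_combination hm)
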